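/- For every N, the first N nodes selected by best-first expansion form a prefix-closed subtree that maximizes the sum of path scores Σ_{i∈T} ρ(i) among all prefix-closed subtrees of size N of the candidate lattice. -/

import Mathlib

/-!
Scores never increase from a node to its child, so the scores of the best-first sequence are
nonincreasing. A node `j` outside the first `N` selected ones has an ancestor (possibly `j` itself)
that is available, but not chosen, at step `N`; its score is therefore at most that of `sel N`,
which is in turn at most every selected score. Hence the first `N` selected nodes are `N` best
nodes of the whole tree, and an exchange argument compares them with any other set of `N` nodes.
-/

/-- A candidate lattice: a rooted tree with multiplicative path scores, where each
node multiplies its parent's score by a weight in [0,1], and the root has score 1. -/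
structure ScoreTree (σ : Type) where
  root : σ
  parent : σ → σ
  depth : σ → ℕ
  weight : σ → ℝ
  score : σ → ℝ
  parent_root : parent root = root
  depth_root : depth root = 0
  depth_node : ∀ i, i ≠ root → depth i = depth (parent i) + 1
  weight_nonneg : ∀ i, 0 ≤ weight i
  weight_le_one : ∀ i, weight i ≤ 1
  score_root : score root = 1
  score_node : ∀ i, i ≠ root → score i = score (parent i) * weight i

theorem Finset.sum_le_sum_of_card_eq_of_le_of_le {ι M : Type*} [AddCommMonoid M] [PartialOrder M]
    [IsOrderedCancelAddMonoid M] [DecidableEq ι] {s t : Finset ι} {f : ι → M} (c : M)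
    (hcard : s.card = t.card) (hs : ∀ i ∈ s \ t, f i ≤ c) (ht : ∀ i ∈ t \ s, c ≤ f i) :
    ∑ i ∈ s, f i ≤ ∑ i ∈ t, f i :=
  Finset.sum_sdiff_le_sum_sdiff.1 <| calc
    ∑ i ∈ s \ t, f i ≤ (s \ t).card • c := Finset.sum_le_card_nsmul _ _ _ hs
    _ = (t \ s).card • c := by rw [Finset.card_sdiff_comm hcard]
    _ ≤ ∑ i ∈ t \ s, f i := Finset.card_nsmul_le_sum _ _ _ ht

namespace ScoreTree

variable {σ : Type} (T : ScoreTree σ)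

def IsPrefixClosed (A : Set σ) : Prop :=
  T.root ∈ A ∧ ∀ i ∈ A, T.parent i ∈ A

theorem induction_on {P : σ → Prop} (i : σ) (root : P T.root)
    (node : ∀ i, i ≠ T.root → P (T.parent i) → P i) : P i := by
  induction hd : T.depth i using Nat.strong_induction_on generalizing i with
  | _ d ih =>
    by_cases hroot : i = T.root
    · exact hroot ▸ root
    · exact node i hroot (ih _ (by have := T.depth_node i hroot; omega) _ rfl)

theorem score_nonneg (i : σ) : 0 ≤ T.score i := by
  induction i using T.induction_on with
  | root => rw [T.score_root]; exact zero_le_one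
  | node i hi ih => rw [T.score_node i hi]; exact mul_nonneg ih (T.weight_nonneg i)

theorem score_le_score_parent (i : σ) : T.score i ≤ T.score (T.parent i) := by
  by_cases hi : i = T.root
  · rw [hi, T.parent_root]
  · rw [T.score_node i hi]
    exact mul_le_of_le_one_right (T.score_nonneg _) (T.weight_le_one i)

theorem exists_frontier_ancestor {A : Set σ} (hroot : T.root ∈ A) {j : σ} (hj : j ∉ A) :
    ∃ j', j' ∉ A ∧ T.parent j' ∈ A ∧ T.score j ≤ T.score j' := by
  induction j using T.induction_on with
  | root => exact absurd hroot hj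
  | node i _ ih =>
    by_cases hparent : T.parent i ∈ A
    · exact ⟨i, hj, hparent, le_rfl⟩
    · obtain ⟨j', hj', hparent', hle⟩ := ih hparent
      exact ⟨j', hj', hparent', (T.score_le_score_parent i).trans hle⟩

end ScoreTree

section BestFirst

variable {σ : Type} {T : ScoreTree σ} {sel : ℕ → σ}

theorem isPrefixClosed_image_range_sel [DecidableEq σ] (hsel0 : sel 0 = T.root)
    (havail : ∀ n, 0 < n → ∃ k < n, sel k = T.parent (sel n)) {N : ℕ} (hN : 0 < N) :
    T.IsPrefixClosed ((Finset.range N).image sel : Set σ) := by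
  have hroot : T.root ∈ (Finset.range N).image sel :=
    Finset.mem_image.2 ⟨0, Finset.mem_range.2 hN, hsel0⟩
  refine ⟨hroot, fun i hi => ?_⟩
  obtain ⟨n, hn, rfl⟩ := Finset.mem_image.1 hi
  rcases Nat.eq_zero_or_pos n with rfl | hn0
  · rwa [hsel0, T.parent_root]
  · obtain ⟨k, hk, hks⟩ := havail n hn0
    exact Finset.mem_image.2 ⟨k, by simp only [Finset.mem_range] at hn ⊢; omega, hks⟩

theorem antitone_score_sel (hinj : Function.Injective sel)
    (havail : ∀ n, 0 < n → ∃ k < n, sel k = T.parent (sel n))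
    (hmax : ∀ n, 0 < n → ∀ j, (∀ k < n, sel k ≠ j) → (∃ k < n, sel k = T.parent j) →
      T.score j ≤ T.score (sel n)) :
    Antitone (T.score ∘ sel) := by
  refine antitone_nat_of_succ_le fun n => ?_
  obtain ⟨k, hk, hks⟩ := havail (n + 1) n.succ_pos
  rcases Nat.lt_succ_iff_lt_or_eq.1 hk with hkn | rfl
  · exact hmax n (by omega) _ (fun m hm h => by have := hinj h; omega) ⟨k, hkn, hks⟩
  · simpa only [Function.comp_apply, hks] using T.score_le_score_parent (sel (k + 1))

theorem score_le_score_sel_of_notMem_image_range [DecidableEq σ] (hsel0 : sel 0 = T.root)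
    (hmax : ∀ n, 0 < n → ∀ j, (∀ k < n, sel k ≠ j) → (∃ k < n, sel k = T.parent j) →
      T.score j ≤ T.score (sel n))
    {N : ℕ} (hN : 0 < N) {j : σ} (hj : j ∉ (Finset.range N).image sel) :
    T.score j ≤ T.score (sel N) := by
  have hroot : T.root ∈ ((Finset.range N).image sel : Set σ) :=
    Finset.mem_image.2 ⟨0, Finset.mem_range.2 hN, hsel0⟩
  obtain ⟨j', hj', hparent, hle⟩ := T.exists_frontier_ancestor hroot hj
  simp only [Finset.coe_image, Finset.coe_range, Set.mem_image, Set.mem_Iio, not_exists,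
    not_and] at hj' hparent
  exact hle.trans (hmax N hN j' hj' hparent)

end BestFirst

/-- For every N > 0, the first N nodes selected by best-first expansion form a
prefix-closed subtree that maximizes the sum of path scores among all
prefix-closed subtrees of size N of the candidate lattice. -/
theorem stmt7 {σ : Type} [DecidableEq σ] (T : ScoreTree σ) (sel : ℕ → σ)
    (hsel0 : sel 0 = T.root)
    (hinj : Function.Injective sel)
    (havail : ∀ n, 0 < n → ∃ k < n, sel k = T.parent (sel n))
    (hmax : ∀ n, 0 < n → ∀ j, (∀ k < n, sel k ≠ j) → (∃ k < n, sel k = T.parent j) →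
      T.score j ≤ T.score (sel n))
    (N : ℕ) (hN : 0 < N) :
    (T.root ∈ (Finset.range N).image sel ∧
      ∀ i ∈ (Finset.range N).image sel, T.parent i ∈ (Finset.range N).image sel) ∧
    ∀ S : Finset σ, T.root ∈ S → (∀ i ∈ S, T.parent i ∈ S) → S.card = N →
      ∑ i ∈ S, T.score i ≤ ∑ i ∈ (Finset.range N).image sel, T.score i := by
  refine ⟨isPrefixClosed_image_range_sel hsel0 havail hN, fun S _ _ hcard => ?_⟩
  refine Finset.sum_le_sum_of_card_eq_of_le_of_le (T.score (sel N)) ?_ ?_ ?_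
  · rw [hcard, Finset.card_image_of_injective _ hinj, Finset.card_range]
  · exact fun j hj =>
      score_le_score_sel_of_notMem_image_range hsel0 hmax hN (Finset.mem_sdiff.1 hj).2
  · intro i hi
    obtain ⟨n, hn, rfl⟩ := Finset.mem_image.1 (Finset.mem_sdiff.1 hi).1
    exact antitone_score_sel hinj havail hmax (Finset.mem_range.1 hn).le
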